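/- Let j be a positive half-integer. For every w ∈ ℂ ∪ {∞}, the coherent vector K(·,w) satisfies ⦀K(·,w)⦀_2 = 1 and its Wehrl entropy equals the conjectured minimal value: S_j(|K(·,w)|²) = 2j/(2j+1). -/

import Mathlib

open MeasureTheory

noncomputable section

/-- The normalized `p`-norm `⦀f⦀_p`, with `m = 2j`. -/
def nnorm (m : ℕ) (p : ℝ) (f : ℂ → ℂ) : ℝ :=
  ((p * ((m : ℝ) / 2) + 1) / Real.pi *
      ∫ z : ℂ, ‖f z‖ ^ p / (1 + ‖z‖ ^ 2) ^ 2) ^ (1 / p)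

/-- The coherent vector `K(·,w)` for `w ∈ ℂ ∪ {∞}` (with `none` encoding `∞`), `m = 2j`. -/
def coherent (m : ℕ) (w : Option ℂ) : ℂ → ℂ := fun z =>
  match w with
  | some w => (1 + z * (starRingEnd ℂ) w) ^ m *
      (((1 + ‖z‖ ^ 2) ^ (-(m : ℝ) / 2) : ℝ) : ℂ) *
      (((1 + ‖w‖ ^ 2) ^ (-(m : ℝ) / 2) : ℝ) : ℂ)
  | none => z ^ m * (((1 + ‖z‖ ^ 2) ^ (-(m : ℝ) / 2) : ℝ) : ℂ)

/-- The Wehrl entropy `S_j(|f|²)`, with `m = 2j`. -/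
def wehrl (m : ℕ) (f : ℂ → ℂ) : ℝ :=
  -(((m : ℝ) + 1) / Real.pi *
      ∫ z : ℂ, ‖f z‖ ^ 2 * Real.log (‖f z‖ ^ 2) /
        (1 + ‖z‖ ^ 2) ^ 2)


/-!
The weight `(1 + ‖z‖²)⁻² d²z` is the round measure of the Riemann sphere, so it is invariant
under the rotations `z ↦ (z + w) / (1 - w̄ z)` and `z ↦ z⁻¹`; these pull `|K(·,w)|²` back to
`|K(·,0)|² = (1 + ‖z‖²)⁻ᵐ` (with `m = 2j`). By Archimedes' hat-box theorem, `t = (1 + ‖z‖²)⁻¹`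
is uniformly distributed on `(0,1)` for this measure of total mass `π`, hence
`∫ g(|K(·,w)|²) = π ∫₀¹ g(tᵐ) dt` for every `g`. Taking `g t = t` and `g t = t log t`
gives `1 / (m + 1)` and `-m / (m + 1)²`.
-/

open Set Real ComplexConjugate
open Complex hiding log

theorem Complex.integral_comp_norm (g : ℝ → ℝ) :
    ∫ z : ℂ, g ‖z‖ = 2 * π * ∫ r in Ioi (0 : ℝ), r * g r := by
  rw [integral_fun_norm_addHaar volume g, Complex.finrank_real_complex, measureReal_def,
    Complex.volume_ball]
  simp only [ENNReal.ofReal_one, one_pow, one_mul, ENNReal.coe_toReal, NNReal.coe_real_pi,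
    Nat.add_one_sub_one, pow_one, smul_eq_mul, nsmul_eq_mul, Nat.cast_ofNat]
  ring

theorem image_inv_one_add_sq_Ioi : (fun r : ℝ => (1 + r ^ 2)⁻¹) '' Ioi 0 = Ioo 0 1 := by
  ext t
  constructor
  · rintro ⟨r, hr, rfl⟩
    have hr : 0 < r := hr
    exact ⟨by positivity, inv_lt_one_of_one_lt₀ (by nlinarith)⟩
  · rintro ⟨ht0, ht1⟩
    have h : 0 < t⁻¹ - 1 := sub_pos.2 ((one_lt_inv₀ ht0).2 ht1)
    exact ⟨√(t⁻¹ - 1), Real.sqrt_pos.2 h, by simp only [sq_sqrt h.le, add_sub_cancel, inv_inv]⟩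

theorem integral_comp_inv_one_add_norm_sq_div_sq (G : ℝ → ℝ) :
    ∫ z : ℂ, G (1 + ‖z‖ ^ 2)⁻¹ / (1 + ‖z‖ ^ 2) ^ 2 = π * ∫ t in (0 : ℝ)..1, G t := by
  have hderiv : ∀ r ∈ Ioi (0 : ℝ), HasDerivWithinAt (fun r : ℝ => (1 + r ^ 2)⁻¹)
      (-(2 * r / (1 + r ^ 2) ^ 2)) (Ioi 0) r := by
    intro r _
    refine (((hasDerivAt_pow 2 r).const_add 1).inv (by positivity)).hasDerivWithinAt.congr_deriv ?_
    simp only [Nat.cast_ofNat]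
    ring
  have hanti : AntitoneOn (fun r : ℝ => (1 + r ^ 2)⁻¹) (Ioi 0) := by
    intro a (ha : 0 < a) b _ hab
    simp only
    gcongr
  rw [Complex.integral_comp_norm (fun r => G (1 + r ^ 2)⁻¹ / (1 + r ^ 2) ^ 2),
    intervalIntegral.integral_of_le zero_le_one, integral_Ioc_eq_integral_Ioo,
    ← image_inv_one_add_sq_Ioi,
    integral_image_eq_integral_deriv_smul_of_antitoneOn measurableSet_Ioi hderiv hanti,
    ← integral_const_mul, ← integral_const_mul]
  refine setIntegral_congr_fun measurableSet_Ioi fun r _ => ?_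
  simp only [neg_neg, smul_eq_mul]
  ring

theorem intervalIntegral_pow_mul_log (n : ℕ) :
    ∫ t in (0 : ℝ)..1, t ^ n * log t = -1 / ((n : ℝ) + 1) ^ 2 := by
  have hn : (n : ℝ) + 1 ≠ 0 := by positivity
  have hcont : Continuous fun t : ℝ =>
      t ^ (n + 1) * log t / (n + 1) - t ^ (n + 1) / (n + 1) ^ 2 := by
    have h : Continuous fun t : ℝ => t ^ n * (t * log t) :=
      (continuous_pow n).mul continuous_mul_log
    simp_rw [pow_succ, mul_assoc]
    fun_prop
  rw [intervalIntegral.integral_eq_sub_of_hasDerivAt_of_le zero_le_one hcont.continuousOn]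
  · simp only [one_pow, Real.log_one, zero_div, zero_pow (Nat.succ_ne_zero n), zero_mul,
      sub_zero]
    ring
  · intro t ht
    refine ((((hasDerivAt_pow (n + 1) t).mul (hasDerivAt_log ht.1.ne')).div_const _).sub
      ((hasDerivAt_pow (n + 1) t).div_const _)).congr_deriv ?_
    have := ht.1.ne'
    simp only [Nat.add_sub_cancel, Nat.cast_add_one]
    field_simp
    ring
  · exact intervalIntegral.intervalIntegrable_log'.continuousOn_mul (continuous_pow n).continuousOn

theorem Complex.det_restrictScalars_toSpanSingleton (c : ℂ) :
    ((ContinuousLinearMap.toSpanSingleton ℂ c).restrictScalars ℝ).det = normSq c := by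
  have h : (((ContinuousLinearMap.toSpanSingleton ℂ c).restrictScalars ℝ) : ℂ →ₗ[ℝ] ℂ)
      = Algebra.lmul ℝ ℂ c := by
    ext z; simp [mul_comm]
  rw [ContinuousLinearMap.det, h, ← Algebra.norm_apply, Algebra.norm_complex_apply]

theorem Complex.integral_image_eq_integral_normSq_deriv_mul {f f' : ℂ → ℂ} {s : Set ℂ}
    (hs : MeasurableSet s) (hf' : ∀ z ∈ s, HasDerivAt f (f' z) z) (hf : InjOn f s)
    (G : ℂ → ℝ) : ∫ z in f '' s, G z = ∫ z in s, normSq (f' z) * G (f z) := by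
  rw [integral_image_eq_integral_abs_det_fderiv_smul volume hs
    (fun z hz => ((hf' z hz).hasFDerivAt.restrictScalars ℝ).hasFDerivWithinAt) hf G]
  simp only [Complex.det_restrictScalars_toSpanSingleton, abs_of_nonneg (normSq_nonneg _),
    smul_eq_mul]

/-- `hconf` says that `f` is an isometry of the spherical metric `|dz| / (1 + ‖z‖²)`. -/
theorem integral_comp_div_one_add_norm_sq_sq {f f' : ℂ → ℂ} {s : Set ℂ}
    (hs : MeasurableSet s) (hs_null : volume sᶜ = 0) (himage_null : volume (f '' s)ᶜ = 0)
    (hf' : ∀ z ∈ s, HasDerivAt f (f' z) z) (hf : InjOn f s)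
    (hconf : ∀ z ∈ s, ‖f' z‖ * (1 + ‖z‖ ^ 2) = 1 + ‖f z‖ ^ 2) (G : ℂ → ℝ) :
    ∫ z, G (f z) / (1 + ‖z‖ ^ 2) ^ 2 = ∫ z, G z / (1 + ‖z‖ ^ 2) ^ 2 := by
  rw [← setIntegral_univ, ← setIntegral_congr_set (ae_eq_univ.2 hs_null),
    ← setIntegral_univ (f := fun z => G z / _), ← setIntegral_congr_set (ae_eq_univ.2 himage_null),
    Complex.integral_image_eq_integral_normSq_deriv_mul hs hf' hf]
  refine setIntegral_congr_fun hs fun z hz => ?_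
  have hf'z : ‖f' z‖ ≠ 0 := by
    intro h
    have := hconf z hz
    rw [h, zero_mul] at this
    linarith [sq_nonneg ‖f z‖]
  rw [← Complex.sq_norm, ← hconf z hz]
  field_simp

theorem volume_setOf_one_sub_mul_eq_zero (a : ℂ) : volume {z : ℂ | 1 - a * z = 0} = 0 := by
  refine Set.Subsingleton.measure_zero
    (fun z₁ (h₁ : 1 - a * z₁ = 0) z₂ (h₂ : 1 - a * z₂ = 0) => ?_) _
  have ha : a ≠ 0 := by rintro rfl; simp at h₁
  exact mul_left_cancel₀ ha (by linear_combination h₂ - h₁)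

theorem norm_add_sq_add_norm_one_sub_conj_mul_sq (w z : ℂ) :
    ‖z + w‖ ^ 2 + ‖1 - conj w * z‖ ^ 2 = (1 + ‖z‖ ^ 2) * (1 + ‖w‖ ^ 2) := by
  simp only [Complex.sq_norm, normSq_apply, add_re, add_im, sub_re, sub_im, mul_re, mul_im,
    one_re, one_im, conj_re, conj_im]
  ring

/-- The rotation of the Riemann sphere taking `0` to `w`. -/
def mobius (w z : ℂ) : ℂ := (z + w) / (1 - conj w * z)

section Mobius

variable {w z : ℂ}

theorem one_add_norm_mobius_sq (hz : 1 - conj w * z ≠ 0) :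
    1 + ‖mobius w z‖ ^ 2 = (1 + ‖z‖ ^ 2) * (1 + ‖w‖ ^ 2) / ‖1 - conj w * z‖ ^ 2 := by
  rw [mobius, norm_div, div_pow, ← norm_add_sq_add_norm_one_sub_conj_mul_sq, add_div,
    div_self (pow_ne_zero 2 (norm_ne_zero_iff.2 hz)), add_comm]

theorem one_add_mobius_mul_conj (hz : 1 - conj w * z ≠ 0) :
    1 + mobius w z * conj w = ((1 + ‖w‖ ^ 2 : ℝ) : ℂ) / (1 - conj w * z) := by
  have hz' : 1 - z * conj w ≠ 0 := by rwa [mul_comm]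
  rw [mobius, ofReal_add, ofReal_one, ofReal_pow, ← mul_conj']
  field_simp
  ring

theorem one_sub_conj_neg_mul_mobius_ne_zero (hz : 1 - conj w * z ≠ 0) :
    1 - conj (-w) * mobius w z ≠ 0 := by
  rw [map_neg, neg_mul, sub_neg_eq_add, mul_comm, one_add_mobius_mul_conj hz]
  exact div_ne_zero (ofReal_ne_zero.2 (by positivity)) hz

theorem mobius_neg_mobius (hz : 1 - conj w * z ≠ 0) : mobius (-w) (mobius w z) = z := by
  have hz' : 1 - z * conj w ≠ 0 := by rwa [mul_comm]
  rw [mobius, div_eq_iff (one_sub_conj_neg_mul_mobius_ne_zero hz), mobius, map_neg]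
  field_simp
  ring

theorem hasDerivAt_mobius (hz : 1 - conj w * z ≠ 0) :
    HasDerivAt (mobius w) (((1 + ‖w‖ ^ 2 : ℝ) : ℂ) / (1 - conj w * z) ^ 2) z := by
  refine (((hasDerivAt_id z).add_const w).div
    (((hasDerivAt_id z).const_mul (conj w)).const_sub 1) hz).congr_deriv ?_
  rw [ofReal_add, ofReal_one, ofReal_pow, ← mul_conj']
  simp only [id, mul_one]
  ring

end Mobius

theorem integral_comp_mobius_div_one_add_norm_sq_sq (w : ℂ) (G : ℂ → ℝ) :
    ∫ z, G (mobius w z) / (1 + ‖z‖ ^ 2) ^ 2 = ∫ z, G z / (1 + ‖z‖ ^ 2) ^ 2 := by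
  have hs : MeasurableSet {z : ℂ | 1 - conj w * z = 0}ᶜ :=
    (measurableSet_eq_fun (by fun_prop) measurable_const).compl
  have himage : (mobius w '' {z | 1 - conj w * z = 0}ᶜ)ᶜ ⊆ {y | 1 - conj (-w) * y = 0} := by
    intro y hy
    by_contra hy'
    refine hy ⟨mobius (-w) y, ?_, ?_⟩
    · simpa using one_sub_conj_neg_mul_mobius_ne_zero hy'
    · simpa using mobius_neg_mobius hy'
  refine integral_comp_div_one_add_norm_sq_sq hs
    (by simpa using volume_setOf_one_sub_mul_eq_zero _)
    (measure_mono_null himage (volume_setOf_one_sub_mul_eq_zero _))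
    (fun z hz => hasDerivAt_mobius hz) (fun z₁ h₁ z₂ h₂ h => ?_) (fun z hz => ?_) G
  · rw [← mobius_neg_mobius h₁, h, mobius_neg_mobius h₂]
  · rw [one_add_norm_mobius_sq hz, norm_div, norm_pow, norm_real, norm_of_nonneg (by positivity)]
    ring

theorem integral_comp_inv_div_one_add_norm_sq_sq (G : ℂ → ℝ) :
    ∫ z, G z⁻¹ / (1 + ‖z‖ ^ 2) ^ 2 = ∫ z, G z / (1 + ‖z‖ ^ 2) ^ 2 := by
  have himage : (Inv.inv '' {(0 : ℂ)}ᶜ)ᶜ ⊆ {0} := by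
    intro y hy
    by_contra hy'
    exact hy ⟨y⁻¹, inv_ne_zero hy', inv_inv y⟩
  refine integral_comp_div_one_add_norm_sq_sq (measurableSet_singleton 0).compl
    (by simp) (measure_mono_null himage (measure_singleton 0))
    (fun z hz => hasDerivAt_inv hz) inv_injective.injOn (fun z hz => ?_) G
  have : ‖z‖ ≠ 0 := norm_ne_zero_iff.2 hz
  rw [norm_neg, norm_inv, norm_pow, norm_inv]
  field_simp
  ring

theorem sq_rpow_neg_natCast_div_two {x : ℝ} (hx : 0 ≤ x) (n : ℕ) :
    (x ^ (-(n : ℝ) / 2)) ^ 2 = x⁻¹ ^ n := by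
  rw [← rpow_natCast _ 2, ← rpow_mul hx, Nat.cast_ofNat, div_mul_cancel₀ _ two_ne_zero,
    rpow_neg hx, rpow_natCast, inv_pow]

section Coherent

variable {m : ℕ} {w z : ℂ}

theorem norm_coherent_some_sq :
    ‖coherent m (some w) z‖ ^ 2
      = (‖1 + z * conj w‖ ^ 2 / ((1 + ‖z‖ ^ 2) * (1 + ‖w‖ ^ 2))) ^ m := by
  have hz : (0 : ℝ) ≤ 1 + ‖z‖ ^ 2 := by positivity
  have hw : (0 : ℝ) ≤ 1 + ‖w‖ ^ 2 := by positivity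
  simp only [coherent, norm_mul, norm_pow, norm_real, norm_of_nonneg (rpow_nonneg hz _),
    norm_of_nonneg (rpow_nonneg hw _), mul_pow, sq_rpow_neg_natCast_div_two hz,
    sq_rpow_neg_natCast_div_two hw]
  rw [div_eq_mul_inv, mul_inv]
  ring

theorem norm_coherent_none_sq : ‖coherent m none z‖ ^ 2 = (‖z‖ ^ 2 / (1 + ‖z‖ ^ 2)) ^ m := by
  have hz : (0 : ℝ) ≤ 1 + ‖z‖ ^ 2 := by positivity
  simp only [coherent, norm_mul, norm_pow, norm_real, norm_of_nonneg (rpow_nonneg hz _),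
    mul_pow, sq_rpow_neg_natCast_div_two hz]
  ring

theorem norm_coherent_some_mobius_sq (hz : 1 - conj w * z ≠ 0) :
    ‖coherent m (some w) (mobius w z)‖ ^ 2 = (1 + ‖z‖ ^ 2)⁻¹ ^ m := by
  rw [norm_coherent_some_sq, one_add_mobius_mul_conj hz, one_add_norm_mobius_sq hz, norm_div,
    norm_real, norm_of_nonneg (by positivity)]
  have : ‖1 - conj w * z‖ ≠ 0 := norm_ne_zero_iff.2 hz
  field_simp

theorem norm_coherent_none_inv_sq (hz : z ≠ 0) :
    ‖coherent m none z⁻¹‖ ^ 2 = (1 + ‖z‖ ^ 2)⁻¹ ^ m := by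
  have : ‖z‖ ≠ 0 := norm_ne_zero_iff.2 hz
  rw [norm_coherent_none_sq, norm_inv]
  field_simp
  ring

end Coherent

theorem integral_comp_norm_coherent_sq (m : ℕ) (w : Option ℂ) (g : ℝ → ℝ) :
    ∫ z, g (‖coherent m w z‖ ^ 2) / (1 + ‖z‖ ^ 2) ^ 2 = π * ∫ t in (0 : ℝ)..1, g (t ^ m) := by
  rw [← integral_comp_inv_one_add_norm_sq_div_sq (fun t => g (t ^ m))]
  cases w with
  | none =>
    rw [← integral_comp_inv_div_one_add_norm_sq_sq]
    refine integral_congr_ae ?_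
    filter_upwards [compl_mem_ae_iff.2 (measure_singleton (0 : ℂ))] with z hz
    rw [norm_coherent_none_inv_sq hz]
  | some w =>
    rw [← integral_comp_mobius_div_one_add_norm_sq_sq w]
    refine integral_congr_ae ?_
    filter_upwards [compl_mem_ae_iff.2 (volume_setOf_one_sub_mul_eq_zero (conj w))] with z hz
    rw [norm_coherent_some_mobius_sq hz]

theorem stmt7_general (m : ℕ) (w : Option ℂ) :
    nnorm m 2 (coherent m w) = 1 ∧
      wehrl m (coherent m w) = (m : ℝ) / ((m : ℝ) + 1) := by
  have hm : (m : ℝ) + 1 ≠ 0 := by positivity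
  constructor
  · rw [nnorm]
    simp_rw [rpow_two]
    rw [integral_comp_norm_coherent_sq m w (fun t => t)]
    simp only [integral_pow, one_pow, zero_pow (Nat.succ_ne_zero m), sub_zero]
    field_simp
    rw [one_rpow]
  · rw [wehrl, integral_comp_norm_coherent_sq m w (fun t => t * log t)]
    simp only [log_pow, mul_left_comm _ (m : ℝ), intervalIntegral.integral_const_mul,
      intervalIntegral_pow_mul_log]
    field_simp

/-- Coherent vectors are normalized and achieve the conjectured minimal Wehrl entropy:
`⦀K(·,w)⦀_2 = 1` and `S_j(|K(·,w)|²) = 2j/(2j+1)`. -/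
theorem stmt7 (m : ℕ) (hm : 1 ≤ m) (w : Option ℂ) :
    nnorm m 2 (coherent m w) = 1 ∧
      wehrl m (coherent m w) = (m : ℝ) / ((m : ℝ) + 1) :=
  stmt7_general m w
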